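/- (Dyadic John–Nirenberg lemma.) Let a : Δ → [0,∞) be a function on dyadic cubes of R^d and suppose there exist N, δ > 0 such that for every dyadic cube R, |{x ∈ R : Σ_{Q ∋ x, Q ⊆ R} a(Q) ≤ N}| ≥ δ |R|. Then Σ_{Q ⊆ R} a(Q)|Q| ≤ C(d,N,δ) |R| for every dyadic cube R. -/

import Mathlib

open MeasureTheory Metric Set ENNReal

/-- The axis-parallel cube with corner `a` and side length `l`. -/
def cube {d : ℕ} (a : Fin d → ℝ) (l : ℝ) : Set (Fin d → ℝ) :=
  Set.Icc a (fun i => a i + l)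

/-- The dyadic cube with index `p = (n, j)`. -/
def dc {d : ℕ} (p : ℤ × (Fin d → ℤ)) : Set (Fin d → ℝ) :=
  cube (fun i => (2 : ℝ) ^ p.1 * (p.2 i : ℝ)) ((2 : ℝ) ^ p.1)

/-!
Write `E(Q) ⊆ Q` for the set where `Σ_{Q' ∋ x, Q' ⊆ Q} a(Q') ≤ N`. The hypothesis `δ|Q| ≤ |E(Q)|`
gives `δ Σ_{Q ⊆ R} a(Q)|Q| ≤ ∫ Σ_{Q ⊆ R} a(Q) 1_{E(Q)}`. Off the null set of points with a dyadic
rational coordinate, the dyadic cubes containing a point are totally ordered by inclusion, so at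
such an `x` every `Q ⊆ R` with `x ∈ E(Q)` lies in the largest one, `Q*`; the integrand at `x` is
then at most the local sum of `Q*` at `x`, which is at most `N`. Integrating over `R` gives
`N|R|`, so `C = N/δ` works.
-/

lemma tsum_indicator_eq_tsum_subtype {ι α M : Type*} [AddCommMonoid M] [TopologicalSpace M]
    (p : ι → Prop) (E : ι → Set α) (f : ι → M) (x : α) :
    ∑' i : {i // p i}, (E i).indicator (fun _ => f i) x = ∑' i : {i // x ∈ E i ∧ p i}, f i := by
  refine (tsum_subtype {i | p i} fun i => (E i).indicator (fun _ => f i) x).trans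
    ((tsum_congr fun i => ?_).trans (tsum_subtype {i | x ∈ E i ∧ p i} f).symm)
  by_cases hi : p i <;> by_cases hx : x ∈ E i <;> simp [hi, hx]

namespace DyadicCube

lemma interval_subset_of_scale_le {n m j k : ℤ} {y : ℝ} (hnm : n ≤ m)
    (hj : 2 ^ n * j < y) (hj' : y < 2 ^ n * j + 2 ^ n)
    (hk : 2 ^ m * k < y) (hk' : y < 2 ^ m * k + 2 ^ m) :
    (2 : ℝ) ^ m * k ≤ 2 ^ n * j ∧ (2 : ℝ) ^ n * j + 2 ^ n ≤ 2 ^ m * k + 2 ^ m := by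
  obtain ⟨s, rfl⟩ := Int.le.dest hnm
  have hpow : (2 : ℝ) ^ (n + s) = 2 ^ n * ((2 ^ s : ℤ) : ℝ) := by
    rw [zpow_add₀ two_ne_zero, zpow_natCast]; push_cast; rfl
  set t : ℤ := 2 ^ s
  have h2n : (0 : ℝ) < 2 ^ n := by positivity
  rw [hpow] at hk hk' ⊢
  have hlo : t * k < j + 1 := by
    have : (2 : ℝ) ^ n * (t * k) < 2 ^ n * (j + 1) := by linarith
    exact_mod_cast lt_of_mul_lt_mul_left this h2n.le
  have hhi : j < t * (k + 1) := by
    have : (2 : ℝ) ^ n * j < 2 ^ n * (t * (k + 1)) := by linarith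
    exact_mod_cast lt_of_mul_lt_mul_left this h2n.le
  have hlo' : ((t * k : ℤ) : ℝ) ≤ j := by exact_mod_cast Int.lt_add_one_iff.mp hlo
  have hhi' : ((j + 1 : ℤ) : ℝ) ≤ t * (k + 1) := by exact_mod_cast hhi
  push_cast at hlo' hhi'
  constructor <;> nlinarith

variable {d : ℕ}

lemma mem_dc {p : ℤ × (Fin d → ℤ)} {x : Fin d → ℝ} :
    x ∈ dc p ↔ ∀ i, 2 ^ p.1 * p.2 i ≤ x i ∧ x i ≤ 2 ^ p.1 * p.2 i + 2 ^ p.1 := by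
  simp only [dc, cube, mem_Icc, Pi.le_def, forall_and]

lemma measurableSet_dc (p : ℤ × (Fin d → ℤ)) : MeasurableSet (dc p) :=
  measurableSet_Icc

lemma dc_subset_dc_iff {p q : ℤ × (Fin d → ℤ)} :
    dc p ⊆ dc q ↔ ∀ i, (2 : ℝ) ^ q.1 * q.2 i ≤ 2 ^ p.1 * p.2 i ∧
      (2 : ℝ) ^ p.1 * p.2 i + 2 ^ p.1 ≤ 2 ^ q.1 * q.2 i + 2 ^ q.1 := by
  rw [dc, cube, dc, cube, Icc_subset_Icc_iff fun i => le_add_of_nonneg_right (by positivity)]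
  simp only [Pi.le_def, forall_and]

lemma scale_le_of_dc_subset (hd : 0 < d) {p q : ℤ × (Fin d → ℤ)} (h : dc p ⊆ dc q) :
    p.1 ≤ q.1 := by
  obtain ⟨hlo, hhi⟩ := dc_subset_dc_iff.mp h ⟨0, hd⟩
  exact (zpow_le_zpow_iff_right₀ (one_lt_two (α := ℝ))).mp (by linarith)

def dyadicGrid (d : ℕ) : Set (Fin d → ℝ) :=
  {x | ∃ i, ∃ n k : ℤ, x i = (2 : ℝ) ^ n * k}

lemma volume_dyadicGrid : volume (dyadicGrid d) = 0 := by
  have : dyadicGrid d = ⋃ (i : Fin d) (n : ℤ) (k : ℤ), {x | x i = (2 : ℝ) ^ n * k} := by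
    ext x; simp [dyadicGrid]
  rw [this, volume_pi]
  exact measure_iUnion_null fun i => measure_iUnion_null fun n => measure_iUnion_null fun k =>
    Measure.pi_hyperplane _ i _

lemma dc_subset_of_scale_le {p q : ℤ × (Fin d → ℤ)} {x : Fin d → ℝ} (hx : x ∉ dyadicGrid d)
    (hxp : x ∈ dc p) (hxq : x ∈ dc q) (hpq : p.1 ≤ q.1) : dc p ⊆ dc q := by
  have hoff : ∀ i (n k : ℤ), x i ≠ (2 : ℝ) ^ n * k := fun i n k h => hx ⟨i, n, k, h⟩
  have hoff' : ∀ i (n k : ℤ), x i ≠ (2 : ℝ) ^ n * k + 2 ^ n := fun i n k h =>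
    hoff i n (k + 1) (by rw [h]; push_cast; ring)
  refine dc_subset_dc_iff.mpr fun i => ?_
  obtain ⟨hp, hp'⟩ := mem_dc.mp hxp i
  obtain ⟨hq, hq'⟩ := mem_dc.mp hxq i
  exact interval_subset_of_scale_le hpq (hp.lt_of_ne (hoff i _ _).symm)
    (hp'.lt_of_ne (hoff' i _ _)) (hq.lt_of_ne (hoff i _ _).symm) (hq'.lt_of_ne (hoff' i _ _))

lemma exists_max_scale (hd : 0 < d) {P : ℤ × (Fin d → ℤ) → Prop} {R : ℤ × (Fin d → ℤ)}
    (hP : ∃ Q, P Q) (hPR : ∀ Q, P Q → dc Q ⊆ dc R) :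
    ∃ Q, P Q ∧ ∀ Q', P Q' → Q'.1 ≤ Q.1 := by
  obtain ⟨Q₀, hQ₀⟩ := hP
  obtain ⟨n, ⟨j, hj⟩, hmax⟩ := Int.exists_greatest_of_bdd (P := fun n => ∃ j, P (n, j))
    ⟨R.1, fun n ⟨j, hj⟩ => scale_le_of_dc_subset hd (hPR _ hj)⟩ ⟨Q₀.1, Q₀.2, hQ₀⟩
  exact ⟨(n, j), hj, fun Q' hQ' => hmax Q'.1 ⟨Q'.2, hQ'⟩⟩

variable (b : ℤ × (Fin d → ℤ) → ℝ≥0∞)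

noncomputable def localSum (R : ℤ × (Fin d → ℤ)) (x : Fin d → ℝ) : ℝ≥0∞ :=
  ∑' Q : {Q : ℤ × (Fin d → ℤ) // x ∈ dc Q ∧ dc Q ⊆ dc R}, b Q

def goodSet (N : ℝ≥0∞) (R : ℤ × (Fin d → ℤ)) : Set (Fin d → ℝ) :=
  {x ∈ dc R | localSum b R x ≤ N}

lemma measurable_localSum (R : ℤ × (Fin d → ℤ)) : Measurable (localSum b R) := by
  have : localSum b R = fun x => ∑' Q : {Q // dc Q ⊆ dc R}, (dc Q.1).indicator (fun _ => b Q) x :=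
    funext fun x => (tsum_indicator_eq_tsum_subtype _ dc b x).symm
  rw [this]
  exact Measurable.tsum fun Q => measurable_const.indicator (measurableSet_dc Q.1)

lemma measurableSet_goodSet (N : ℝ≥0∞) (R : ℤ × (Fin d → ℤ)) : MeasurableSet (goodSet b N R) :=
  (measurableSet_dc R).inter (measurable_localSum b R measurableSet_Iic)

lemma tsum_indicator_goodSet_le (hd : 0 < d) (N : ℝ≥0∞) (R : ℤ × (Fin d → ℤ)) {x : Fin d → ℝ}
    (hx : x ∉ dyadicGrid d) :
    ∑' Q : {Q // dc Q ⊆ dc R}, (goodSet b N Q).indicator (fun _ => b Q) x ≤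
      (dc R).indicator (fun _ => N) x := by
  rw [tsum_indicator_eq_tsum_subtype]
  by_cases h : ∃ Q, x ∈ goodSet b N Q ∧ dc Q ⊆ dc R
  · obtain ⟨Q, ⟨⟨hxQ, hsum⟩, hQR⟩, hmax⟩ := exists_max_scale hd h fun _ hQ => hQ.2
    rw [indicator_of_mem (hQR hxQ)]
    calc _ ≤ localSum b Q x := ENNReal.tsum_mono_subtype b fun Q' hQ' =>
          ⟨hQ'.1.1, dc_subset_of_scale_le hx hQ'.1.1 hxQ (hmax Q' hQ')⟩
      _ ≤ N := hsum
  · push Not at h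
    rw [ENNReal.tsum_eq_zero.mpr fun Q => (h Q.1 Q.2.1 Q.2.2).elim]
    exact zero_le

lemma mul_tsum_mul_volume_le (hd : 0 < d) (N δ : ℝ≥0∞)
    (hgood : ∀ R, δ * volume (dc R) ≤ volume (goodSet b N R)) (R : ℤ × (Fin d → ℤ)) :
    δ * ∑' Q : {Q // dc Q ⊆ dc R}, b Q * volume (dc Q.1) ≤ N * volume (dc R) :=
  calc _ = ∑' Q : {Q // dc Q ⊆ dc R}, b Q * (δ * volume (dc Q.1)) := by
        rw [← ENNReal.tsum_mul_left]; congr 1 with Q; ring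
    _ ≤ ∑' Q : {Q // dc Q ⊆ dc R}, b Q * volume (goodSet b N Q) :=
        ENNReal.tsum_le_tsum fun Q => by gcongr; exact hgood Q
    _ = ∫⁻ x, ∑' Q : {Q // dc Q ⊆ dc R}, (goodSet b N Q).indicator (fun _ => b Q) x := by
        rw [lintegral_tsum fun Q : {Q // dc Q ⊆ dc R} => (measurable_const.indicator
          (measurableSet_goodSet b N Q)).aemeasurable]
        simp_rw [lintegral_indicator_const (measurableSet_goodSet b N _)]
    _ ≤ ∫⁻ x, (dc R).indicator (fun _ => N) x := by
        refine lintegral_mono_ae ?_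
        filter_upwards [measure_eq_zero_iff_ae_notMem.mp volume_dyadicGrid] with x hx
        exact tsum_indicator_goodSet_le b hd N R hx
    _ = N * volume (dc R) := lintegral_indicator_const (measurableSet_dc R) N

end DyadicCube

open DyadicCube

/-- Dyadic John–Nirenberg lemma: if `a : Δ → [0,∞)` is such that for every dyadic cube `R` the
set where `Σ_{Q ∋ x, Q ⊆ R} a(Q) ≤ N` has measure at least `δ|R|`, then
`Σ_{Q ⊆ R} a(Q)|Q| ≤ C(d,N,δ)|R|` for every dyadic `R`. -/
theorem dyadic_john_nirenberg (d : ℕ) (hd : 0 < d) (N δ : ℝ) (hN : 0 < N) (hδ : 0 < δ) :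
    ∃ C : ℝ, 0 < C ∧
      ∀ a : (ℤ × (Fin d → ℤ)) → ℝ, (∀ Q, 0 ≤ a Q) →
        (∀ R : ℤ × (Fin d → ℤ),
          ENNReal.ofReal δ * volume (dc R) ≤
            volume {x ∈ dc R |
              (∑' Q : {Q : ℤ × (Fin d → ℤ) // x ∈ dc Q ∧ dc Q ⊆ dc R},
                  ENNReal.ofReal (a Q.val)) ≤ ENNReal.ofReal N}) →
        ∀ R : ℤ × (Fin d → ℤ),
          (∑' Q : {Q : ℤ × (Fin d → ℤ) // dc Q ⊆ dc R},
              ENNReal.ofReal (a Q.val) * volume (dc Q.val))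
            ≤ ENNReal.ofReal C * volume (dc R) := by
  refine ⟨N / δ, div_pos hN hδ, fun a _ hgood R => ?_⟩
  have key := mul_tsum_mul_volume_le (fun Q => ENNReal.ofReal (a Q)) hd _ _ hgood R
  rw [ENNReal.ofReal_div_of_pos hδ, ← ENNReal.mul_div_right_comm,
    ENNReal.le_div_iff_mul_le (Or.inl (ENNReal.ofReal_pos.mpr hδ).ne') (Or.inl ofReal_ne_top)]
  exact (mul_comm _ _).trans_le key
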